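/- Let q be a prime power, F_q a finite field with q elements, and F an extension field of F_q of degree m. Let α, n, J, J̃ be positive integers with J̃ ≤ J ≤ m, let G be a J × (nα) matrix over F_q with its columns grouped into n thick columns of width α, and let θ_1,…,θ_J ∈ F be linearly independent over F_q. If S ⊆ {1,…,n} is a set of thick-column indices with rank(G|_S) ≥ J̃, then any two distinct linearized polynomials f, g of q-degree at most J̃−1 over F give codewords (f(θ_1),…,f(θ_J))·G and (g(θ_1),…,g(θ_J))·G that differ in at least one thick position belonging to S; i.e., the thick symbols indexed by S determine f uniquely, so the code recovers from the erasure of all thick symbols outside S. -/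

import Mathlib

/-!
With `w = u - v`, the codeword difference at a position `p` is
`∑ i, G i p • L_w (θ i) = L_w (∑ i, G i p • θ i)`, where `L_w x = ∑ l, w l * x ^ q ^ l` is
`Fq`-linear because `x ↦ x ^ q` is an `Fq`-algebra endomorphism. If the two codewords agree
on `S`, then `L_w` vanishes on the image under `c ↦ ∑ i, c i • θ i` of the column space of
`G|_S`, a subspace of dimension `rank (G|_S) ≥ J̃` since the `θ i` are independent. That is at
least `q ^ J̃` roots of a polynomial of degree at most `q ^ (J̃ - 1)`, so `w = 0`.
-/

/-- The rank of the submatrix of `G` formed by the thick columns indexed by `S`: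
columns of `G` are indexed by pairs `(j, a)` with `j` the thick-column index and
`a` the position inside the thick column (of width `α`). -/
noncomputable def thickRank {K : Type*} [Field K] {R C : Type*} [Fintype C] [DecidableEq C]
    {α : ℕ} (G : Matrix R (C × Fin α) K) (S : Finset C) : ℕ :=
  (G.submatrix id (fun p : {p : C × Fin α // p.1 ∈ S} => (p : C × Fin α))).rank

open Polynomial Module

namespace FiniteField

variable (K : Type*) {L : Type*} [Field K] [Fintype K] [Field L] {t : ℕ}

noncomputable def linearizedPoly (w : Fin t → L) : L[X] :=
  ∑ l, C (w l) * X ^ Fintype.card K ^ (l : ℕ)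

theorem coeff_linearizedPoly_card_pow (w : Fin t → L) (l : Fin t) :
    (linearizedPoly K w).coeff (Fintype.card K ^ (l : ℕ)) = w l := by
  have hinj := Nat.pow_right_injective (Fintype.one_lt_card (α := K))
  rw [linearizedPoly, finsetSum_coeff, Finset.sum_eq_single l]
  · simp
  · intro l' _ hne
    simpa [coeff_X_pow] using fun h => absurd (Fin.ext (hinj h).symm) hne
  · simp

theorem natDegree_linearizedPoly_lt (w : Fin t → L) (ht : 0 < t) :
    (linearizedPoly K w).natDegree < Fintype.card K ^ t := by
  refine lt_of_le_of_lt (natDegree_sum_le_of_forall_le _ _ fun l _ => ?_)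
    (Nat.pow_lt_pow_right Fintype.one_lt_card (Nat.sub_lt ht one_pos))
  exact (natDegree_C_mul_X_pow_le _ _).trans
    (Nat.pow_le_pow_right Fintype.card_pos (Nat.le_sub_one_of_lt l.isLt))

variable [Algebra K L]

noncomputable def linearizedMap (w : Fin t → L) : L →ₗ[K] L :=
  ∑ l, w l • ((frobeniusAlgHom K L) ^ (l : ℕ)).toLinearMap

theorem linearizedMap_apply (w : Fin t → L) (x : L) :
    linearizedMap K w x = ∑ l, w l * x ^ Fintype.card K ^ (l : ℕ) := by
  simp [linearizedMap, AlgHom.coe_pow, coe_frobeniusAlgHom, pow_iterate]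

theorem eval_linearizedPoly (w : Fin t → L) (x : L) :
    (linearizedPoly K w).eval x = linearizedMap K w x := by
  simp [linearizedPoly, linearizedMap_apply, eval_finsetSum]

theorem linearizedMap_sub (u v : Fin t → L) :
    linearizedMap K (u - v) = linearizedMap K u - linearizedMap K v := by
  ext x
  simp [linearizedMap_apply, sub_mul]

theorem eq_zero_of_linearizedMap_eq_zero_on {w : Fin t → L} (V : Submodule K L)
    (hV : t ≤ finrank K V) (h : ∀ x ∈ V, linearizedMap K w x = 0) : w = 0 := by
  by_contra hw
  obtain ⟨l, hl⟩ := Function.ne_iff.mp hw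
  have hf : linearizedPoly K w ≠ 0 := fun hf =>
    hl (by simpa [hf] using (coeff_linearizedPoly_card_pow K w l).symm)
  have : Module.Finite K V := Module.finite_of_finrank_pos (l.pos.trans_le hV)
  have : Fintype V := @Fintype.ofFinite V (Module.finite_of_finite K)
  have hroots : (V : Set L).toFinset.val ⊆ (linearizedPoly K w).roots := fun x hx => by
    rw [mem_roots hf, IsRoot, eval_linearizedPoly]
    exact h x (by simpa using hx)
  have hcard : Fintype.card K ^ t ≤ Fintype.card K ^ finrank K V :=
    Nat.pow_le_pow_right Fintype.card_pos hV
  rw [← card_eq_pow_finrank] at hcard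
  exact (natDegree_linearizedPoly_lt K w l.pos).not_ge <| hcard.trans <|
    (Set.toFinset_card (V : Set L)).symm.trans_le (card_le_degree_of_subset_roots hroots)

theorem eq_zero_of_sum_linearizedMap_mul_eq_zero {ι P : Type*} [Fintype ι] [Fintype P]
    [DecidableEq P] {θ : ι → L} (hθ : LinearIndependent K θ) {G : Matrix ι P K}
    {w : Fin t → L} (ht : t ≤ G.rank)
    (h : ∀ p, ∑ i, linearizedMap K w (θ i) * algebraMap K L (G i p) = 0) : w = 0 := by
  set ψ := Fintype.linearCombination K θ
  have hψ : Function.Injective ψ := hθ.fintypeLinearCombination_injective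
  have hcomp : linearizedMap K w ∘ₗ ψ ∘ₗ G.mulVecLin = 0 := by
    ext p
    simp only [LinearMap.comp_apply, Matrix.mulVecLin_apply, ψ,
      Fintype.linearCombination_apply, map_sum, map_smul, LinearMap.zero_apply]
    simpa [Algebra.smul_def, mul_comm] using h p
  apply eq_zero_of_linearizedMap_eq_zero_on K ((LinearMap.range G.mulVecLin).map ψ)
  · rwa [← (Submodule.equivMapOfInjective ψ hψ _).finrank_eq]
  · rintro _ ⟨_, ⟨z, rfl⟩, rfl⟩
    exact LinearMap.congr_fun hcomp z

end FiniteField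

open FiniteField

theorem stmt_4_general (q α n J Jt : ℕ)
    (F : Type*) [Field F] (Fq : Subfield F) [Fintype Fq]
    (hcard : Fintype.card Fq = q)
    (G : Matrix (Fin J) (Fin n × Fin α) Fq)
    (θ : Fin J → F) (hθ : LinearIndependent Fq θ)
    (enc : (Fin Jt → F) → (Fin n × Fin α → F))
    (henc : ∀ u p, enc u p = ∑ i, (∑ l, u l * θ i ^ q ^ (l : ℕ)) * (G i p : F))
    (S : Finset (Fin n)) (hS : Jt ≤ thickRank G S) :
    ∀ u v : Fin Jt → F, u ≠ v → ∃ j ∈ S, ∃ a : Fin α, enc u (j, a) ≠ enc v (j, a) := by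
  subst hcard
  intro u v huv
  by_contra! hagree
  refine sub_ne_zero.mpr huv (eq_zero_of_sum_linearizedMap_mul_eq_zero Fq hθ hS fun p => ?_)
  have hcodeword : ∀ w p, enc w p = ∑ i, linearizedMap Fq w (θ i) * algebraMap Fq F (G i p) :=
    fun w p => by simp [henc, linearizedMap_apply, Subfield.algebraMap_ofSubfield]
  simp only [linearizedMap_sub, LinearMap.sub_apply, sub_mul, Finset.sum_sub_distrib,
    Matrix.submatrix_apply, id, ← hcodeword]
  exact sub_eq_zero.mpr (hagree _ p.2 _)

/-- Let `q` be a prime power, `Fq` a subfield with `q` elements of a field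
`F` with `[F : Fq] = m`, and `α, n, J, J̃` positive integers with `J̃ ≤ J ≤ m`.  Let `G` be
a `J × (nα)` matrix over `Fq` with its columns grouped into `n` thick columns of width `α`,
and let `θ₁, …, θ_J ∈ F` be linearly independent over `Fq`.  If `S` is a set of
thick-column indices with `rank (G|_S) ≥ J̃`, then any two distinct linearized polynomials
`f, g` of `q`-degree at most `J̃ - 1` over `F` (encoded by their coefficient vectors) give
codewords `(f(θ₁), …, f(θ_J))·G` and `(g(θ₁), …, g(θ_J))·G` that differ in at least one
thick position belonging to `S`: the thick symbols indexed by `S` determine `f` uniquely,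
so the code recovers from the erasure of all thick symbols outside `S`. -/
theorem stmt_4 (q m α n J Jt : ℕ) (hq : IsPrimePow q)
    (hα : 0 < α) (hn : 0 < n) (hJt : 0 < Jt) (hJtJ : Jt ≤ J) (hJm : J ≤ m)
    (F : Type*) [Field F] (Fq : Subfield F) [Fintype Fq]
    (hcard : Fintype.card Fq = q) (hm : Module.finrank Fq F = m)
    (G : Matrix (Fin J) (Fin n × Fin α) Fq)
    (θ : Fin J → F) (hθ : LinearIndependent Fq θ)
    (enc : (Fin Jt → F) → (Fin n × Fin α → F))
    (henc : ∀ u p, enc u p = ∑ i, (∑ l, u l * θ i ^ q ^ (l : ℕ)) * (G i p : F))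
    (S : Finset (Fin n)) (hS : Jt ≤ thickRank G S) :
    ∀ u v : Fin Jt → F, u ≠ v → ∃ j ∈ S, ∃ a : Fin α, enc u (j, a) ≠ enc v (j, a) :=
  stmt_4_general q α n J Jt F Fq hcard G θ hθ enc henc S hS
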